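/- Define Φ_{σ,τ}(F) = (d ↦ addcost_τ(1, F(d))) if F is strongly monotonic, and Φ_{σ,τ}(F) = (d ↦ addcost_τ(cost_σ(d)+1, F(d))) if F is constant. Then Φ_{σ,τ} maps every such F to a strongly monotonic function from the interpretation of σ to that of τ, and Φ_{σ,τ} is itself strongly monotonic with respect to pointwise comparison: if F(x) ⊐ G(x) for all x then Φ(F)(x) ⊐ Φ(G)(x) for all x, and similarly for ⊒. -/

import Mathlib

/-- Simple types over a set of sorts `S`. -/
inductive Ty (S : Type) : Type where
  | base : S → Ty S
  | arrow : Ty S → Ty S → Ty S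

/-- The interpretation of types: a base sort `ι` is interpreted as the set of
tuples `ℕ^{K ι + 1}` (so tuples always have length ≥ 1), and an arrow type as
the full function space (membership in the strongly monotonic functionals is
the predicate `Mem` below). -/
def Interp {S : Type} (K : S → ℕ) : Ty S → Type
  | .base ι => Fin (K ι + 1) → ℕ
  | .arrow σ τ => Interp K σ → Interp K τ

mutual
/-- Membership in the set of strongly monotonic functionals of type `σ`. -/
def Mem {S : Type} (K : S → ℕ) : (σ : Ty S) → Interp K σ → Prop
  | .base _, _ => True
  | .arrow σ τ, F =>
      (∀ x, Mem K σ x → Mem K τ (F x)) ∧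
      (∀ x y, Mem K σ x → Mem K σ y → TGt K σ x y → TGt K τ (F x) (F y)) ∧
      (∀ x y, Mem K σ x → Mem K σ y → TGe K σ x y → TGe K τ (F x) (F y))

/-- The hereditary strict order `⊐` on the interpretation of a type. -/
def TGt {S : Type} (K : S → ℕ) : (σ : Ty S) → Interp K σ → Interp K σ → Prop
  | .base _, x, y => (∀ i, y i ≤ x i) ∧ y 0 < x 0
  | .arrow σ τ, F, G => (∃ x, Mem K σ x) ∧ ∀ x, Mem K σ x → TGt K τ (F x) (G x)

/-- The hereditary weak order `⊒` on the interpretation of a type. -/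
def TGe {S : Type} (K : S → ℕ) : (σ : Ty S) → Interp K σ → Interp K σ → Prop
  | .base _, x, y => ∀ i, y i ≤ x i
  | .arrow σ τ, F, G => ∀ x, Mem K σ x → TGe K τ (F x) (G x)
end

/-- `addcost σ c x` hereditarily adds `c` to the cost (first) component. -/
def addcost {S : Type} (K : S → ℕ) : (σ : Ty S) → ℕ → Interp K σ → Interp K σ
  | .base _, c, x => fun i => if i = 0 then c + x i else x i
  | .arrow σ τ, c, F => fun d => addcost K τ c (F d)

mutual
/-- The hereditarily minimal element `0_σ`. -/
def nul {S : Type} (K : S → ℕ) : (σ : Ty S) → Interp K σ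
  | .base _ => fun _ => 0
  | .arrow σ τ => fun d => addcost K τ (cost K σ d) (nul K τ)

/-- The hereditary cost extraction `cost_σ`. -/
def cost {S : Type} (K : S → ℕ) : (σ : Ty S) → Interp K σ → ℕ
  | .base _, x => x 0
  | .arrow σ τ, F => cost K τ (F (nul K σ))
end

/-- `F` is a constant function from the interpretation of `σ` into the
interpretation of `τ`. -/
def IsConst {S : Type} (K : S → ℕ) (σ τ : Ty S)
    (F : Interp K σ → Interp K τ) : Prop :=
  (∀ x, Mem K σ x → Mem K τ (F x)) ∧
  (∀ x y, Mem K σ x → Mem K σ y → F x = F y)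

open Classical in
/-- The monotonicity function `Φ_{σ,τ}`: if `F` is strongly monotonic it adds
`1` to the cost, otherwise it adds `cost σ d + 1`. -/
noncomputable def Phi {S : Type} (K : S → ℕ) (σ τ : Ty S)
    (F : Interp K σ → Interp K τ) : Interp K σ → Interp K τ :=
  if Mem K (Ty.arrow σ τ) F then fun d => addcost K τ 1 (F d)
  else fun d => addcost K τ (cost K σ d + 1) (F d)

/-! The order properties of `⊐`, `⊒`, `addcost` and `cost` all follow by induction on types.
The substantial one is that a strongly monotonic `F` satisfies `F x ⊒ addcost (cost x) (F 0)`,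
by induction on `n ≤ cost x`, using `x ⊐ addcost n 0` for `n < cost x`. It settles the case of
a strongly monotonic `F` above a constant `G`, where
`Φ F x = addcost 1 (F x) ⊒ addcost (cost x + 1) (F 0)` and `Φ G x = addcost (cost x + 1) (G 0)`.
-/

section
variable {S : Type} {K : S → ℕ}

theorem addcost_base_apply_zero {ι : S} (c : ℕ) (x : Interp K (.base ι)) :
    addcost K (.base ι) c x 0 = c + x 0 := by
  simp [addcost]

theorem addcost_base_apply_of_ne_zero {ι : S} (c : ℕ) (x : Interp K (.base ι))
    {i : Fin (K ι + 1)} (hi : i ≠ 0) : addcost K (.base ι) c x i = x i := by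
  simp [addcost, hi]

@[simp]
theorem addcost_zero {σ : Ty S} (x : Interp K σ) : addcost K σ 0 x = x := by
  induction σ with
  | base ι => funext i; simp [addcost]
  | arrow σ τ _ ihτ => funext d; exact ihτ (x d)

theorem addcost_addcost {σ : Ty S} (a b : ℕ) (x : Interp K σ) :
    addcost K σ a (addcost K σ b x) = addcost K σ (a + b) x := by
  induction σ with
  | base ι =>
    funext i
    by_cases hi : i = 0
    · subst hi; simp only [addcost_base_apply_zero]; omega
    · simp only [addcost_base_apply_of_ne_zero _ _ hi]
  | arrow σ τ _ ihτ => funext d; exact ihτ (x d)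

@[simp]
theorem cost_addcost {σ : Ty S} (c : ℕ) (x : Interp K σ) :
    cost K σ (addcost K σ c x) = c + cost K σ x := by
  induction σ with
  | base ι => exact addcost_base_apply_zero c x
  | arrow σ τ _ ihτ => exact ihτ (x (nul K σ))

theorem TGe.refl {σ : Ty S} (x : Interp K σ) : TGe K σ x x := by
  induction σ with
  | base ι => exact fun _ => le_rfl
  | arrow σ τ _ ihτ => exact fun d _ => ihτ (x d)

theorem TGe.trans {σ : Ty S} {x y z : Interp K σ} (hxy : TGe K σ x y) (hyz : TGe K σ y z) :
    TGe K σ x z := by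
  induction σ with
  | base ι => exact fun i => (hyz i).trans (hxy i)
  | arrow σ τ _ ihτ => exact fun d hd => ihτ (hxy d hd) (hyz d hd)

theorem TGe.trans_tgt {σ : Ty S} {x y z : Interp K σ} (hxy : TGe K σ x y)
    (hyz : TGt K σ y z) : TGt K σ x z := by
  induction σ with
  | base ι => exact ⟨fun i => (hyz.1 i).trans (hxy i), hyz.2.trans_le (hxy 0)⟩
  | arrow σ τ _ ihτ => exact ⟨hyz.1, fun d hd => ihτ (hxy d hd) (hyz.2 d hd)⟩

theorem TGt.trans_tge {σ : Ty S} {x y z : Interp K σ} (hxy : TGt K σ x y)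
    (hyz : TGe K σ y z) : TGt K σ x z := by
  induction σ with
  | base ι => exact ⟨fun i => (hyz i).trans (hxy.1 i), (hyz 0).trans_lt hxy.2⟩
  | arrow σ τ _ ihτ => exact ⟨hxy.1, fun d hd => ihτ (hxy.2 d hd) (hyz d hd)⟩

theorem TGe.addcost_mono {σ : Ty S} {c c' : ℕ} {x y : Interp K σ} (hc : c' ≤ c)
    (hxy : TGe K σ x y) : TGe K σ (addcost K σ c x) (addcost K σ c' y) := by
  induction σ with
  | base ι =>
    intro i
    by_cases hi : i = 0
    · subst hi; simp only [addcost_base_apply_zero]; exact Nat.add_le_add hc (hxy 0)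
    · simp only [addcost_base_apply_of_ne_zero _ _ hi]; exact hxy i
  | arrow σ τ _ ihτ => exact fun d hd => ihτ (hxy d hd)

theorem TGt.addcost_mono {σ : Ty S} {c c' : ℕ} {x y : Interp K σ} (hc : c' ≤ c)
    (hxy : TGt K σ x y) : TGt K σ (addcost K σ c x) (addcost K σ c' y) := by
  induction σ with
  | base ι =>
    refine ⟨fun i => TGe.addcost_mono (σ := .base ι) hc hxy.1 i, ?_⟩
    simp only [addcost_base_apply_zero]
    exact Nat.add_lt_add_of_le_of_lt hc hxy.2
  | arrow σ τ _ ihτ => exact ⟨hxy.1, fun d hd => ihτ (hxy.2 d hd)⟩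

theorem TGt.tge_addcost_one {σ : Ty S} {x y : Interp K σ} (hxy : TGt K σ x y) :
    TGe K σ x (addcost K σ 1 y) := by
  induction σ with
  | base ι =>
    intro i
    by_cases hi : i = 0
    · subst hi; rw [addcost_base_apply_zero]; have := hxy.2; omega
    · rw [addcost_base_apply_of_ne_zero _ _ hi]; exact hxy.1 i
  | arrow σ τ _ ihτ => exact fun d hd => ihτ (hxy.2 d hd)

theorem mem_addcost {σ : Ty S} {x : Interp K σ} (c : ℕ) (hx : Mem K σ x) :
    Mem K σ (addcost K σ c x) := by
  induction σ with
  | base ι => trivial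
  | arrow σ τ _ ihτ =>
    exact ⟨fun d hd => ihτ (hx.1 d hd),
      fun d e hd he h => (hx.2.1 d e hd he h).addcost_mono le_rfl,
      fun d e hd he h => (hx.2.2 d e hd he h).addcost_mono le_rfl⟩

/- These four facts have to be proved together: `nul` on an arrow type is strongly monotonic
because `cost` is monotonic on its domain, and `cost` and the strict order on arrow types look
at `nul` of the domain. -/
theorem mem_nul_and_cost_mono (σ : Ty S) :
    Mem K σ (nul K σ) ∧
    (∀ x y, TGe K σ x y → cost K σ y ≤ cost K σ x) ∧
    (∀ x y, TGt K σ x y → cost K σ y < cost K σ x) ∧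
    (∀ (c c' : ℕ) x y, c' < c → TGe K σ x y →
      TGt K σ (addcost K σ c x) (addcost K σ c' y)) := by
  induction σ with
  | base ι =>
    refine ⟨trivial, fun x y h => h 0, fun x y h => h.2, fun c c' x y hc h => ?_⟩
    refine ⟨fun i => TGe.addcost_mono (σ := .base ι) hc.le h i, ?_⟩
    simp only [addcost_base_apply_zero]
    exact Nat.add_lt_add_of_lt_of_le hc (h 0)
  | arrow σ τ ihσ ihτ =>
    obtain ⟨nulσ, cost_leσ, cost_ltσ, -⟩ := ihσ
    obtain ⟨nulτ, cost_leτ, cost_ltτ, tgt_addcostτ⟩ := ihτ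
    refine ⟨⟨fun _ _ => mem_addcost _ nulτ, ?_, ?_⟩, ?_, ?_, ?_⟩
    · exact fun x y _ _ h => tgt_addcostτ _ _ _ _ (cost_ltσ x y h) (TGe.refl _)
    · exact fun x y _ _ h => (TGe.refl _).addcost_mono (cost_leσ x y h)
    · exact fun F G h => cost_leτ _ _ (h _ nulσ)
    · exact fun F G h => cost_ltτ _ _ (h.2 _ nulσ)
    · exact fun c c' F G hc h =>
        ⟨⟨_, nulσ⟩, fun d hd => tgt_addcostτ c c' _ _ hc (h d hd)⟩

theorem mem_nul (σ : Ty S) : Mem K σ (nul K σ) :=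
  (mem_nul_and_cost_mono σ).1

theorem TGe.cost_le {σ : Ty S} {x y : Interp K σ} (h : TGe K σ x y) :
    cost K σ y ≤ cost K σ x :=
  (mem_nul_and_cost_mono σ).2.1 x y h

theorem TGt.cost_lt {σ : Ty S} {x y : Interp K σ} (h : TGt K σ x y) :
    cost K σ y < cost K σ x :=
  (mem_nul_and_cost_mono σ).2.2.1 x y h

theorem TGe.tgt_addcost_of_lt {σ : Ty S} {c c' : ℕ} {x y : Interp K σ} (hc : c' < c)
    (h : TGe K σ x y) : TGt K σ (addcost K σ c x) (addcost K σ c' y) :=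
  (mem_nul_and_cost_mono σ).2.2.2 c c' x y hc h

theorem tge_addcost_cost_apply_nul_of_tge {σ τ : Ty S}
    (hσ : ∀ x, Mem K σ x → TGe K σ x (addcost K σ (cost K σ x) (nul K σ)))
    {F : Interp K σ → Interp K τ} (hF : Mem K (.arrow σ τ) F) {x : Interp K σ}
    (hx : Mem K σ x) : TGe K τ (F x) (addcost K τ (cost K σ x) (F (nul K σ))) := by
  suffices h : ∀ n x, Mem K σ x → n ≤ cost K σ x →
      TGe K τ (F x) (addcost K τ n (F (nul K σ))) from h _ x hx le_rfl
  intro n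
  induction n with
  | zero =>
    intro x hx _
    have hx_nul : TGe K σ x (nul K σ) := by
      simpa using (hσ x hx).trans ((TGe.refl _).addcost_mono (Nat.zero_le _))
    simpa using hF.2.2 x _ hx (mem_nul σ) hx_nul
  | succ n ih =>
    intro x hx hn
    set y := addcost K σ n (nul K σ)
    have hy : Mem K σ y := mem_addcost n (mem_nul σ)
    have hxy : TGt K σ x y := (hσ x hx).trans_tgt ((TGe.refl _).tgt_addcost_of_lt (by omega))
    have hFy : TGe K τ (F y) (addcost K τ n (F (nul K σ))) := ih y hy (by simp [y])
    have hFxy : TGt K τ (F x) (addcost K τ n (F (nul K σ))) :=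
      (hF.2.1 x y hx hy hxy).trans_tge hFy
    simpa [addcost_addcost, add_comm] using hFxy.tge_addcost_one

theorem tge_addcost_cost_nul {σ : Ty S} {x : Interp K σ} (hx : Mem K σ x) :
    TGe K σ x (addcost K σ (cost K σ x) (nul K σ)) := by
  induction σ with
  | base ι =>
    intro i
    by_cases hi : i = 0
    · subst hi; rw [addcost_base_apply_zero]; simp [nul, cost]
    · rw [addcost_base_apply_of_ne_zero _ _ hi]; exact Nat.zero_le _
  | arrow σ τ ihσ ihτ =>
    intro d hd
    have hx_nul := ihτ (hx.1 _ (mem_nul σ))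
    have := (tge_addcost_cost_apply_nul_of_tge (fun _ => ihσ) hx hd).trans
      (hx_nul.addcost_mono le_rfl)
    rwa [addcost_addcost, add_comm, ← addcost_addcost] at this

theorem tge_addcost_cost_apply_nul {σ τ : Ty S} {F : Interp K σ → Interp K τ}
    (hF : Mem K (.arrow σ τ) F) {x : Interp K σ} (hx : Mem K σ x) :
    TGe K τ (F x) (addcost K τ (cost K σ x) (F (nul K σ))) :=
  tge_addcost_cost_apply_nul_of_tge (fun _ => tge_addcost_cost_nul) hF hx

theorem IsConst.mem_addcost_cost {σ τ : Ty S} {F : Interp K σ → Interp K τ}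
    (hF : IsConst K σ τ F) (c : ℕ) :
    Mem K (.arrow σ τ) (fun d => addcost K τ (cost K σ d + c) (F d)) := by
  refine ⟨fun d hd => mem_addcost _ (hF.1 d hd), fun d e hd he h => ?_, fun d e hd he h => ?_⟩
  · dsimp only
    rw [hF.2 d e hd he]
    exact (TGe.refl _).tgt_addcost_of_lt (Nat.add_lt_add_right h.cost_lt c)
  · dsimp only
    rw [hF.2 d e hd he]
    exact (TGe.refl _).addcost_mono (Nat.add_le_add_right h.cost_le c)

theorem Phi_of_mem {σ τ : Ty S} {F : Interp K σ → Interp K τ} (hF : Mem K (.arrow σ τ) F) :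
    Phi K σ τ F = fun d => addcost K τ 1 (F d) :=
  if_pos hF

theorem Phi_of_not_mem {σ τ : Ty S} {F : Interp K σ → Interp K τ}
    (hF : ¬ Mem K (.arrow σ τ) F) :
    Phi K σ τ F = fun d => addcost K τ (cost K σ d + 1) (F d) :=
  if_neg hF

theorem mem_Phi {σ τ : Ty S} {F : Interp K σ → Interp K τ}
    (hF : Mem K (.arrow σ τ) F ∨ IsConst K σ τ F) : Mem K (.arrow σ τ) (Phi K σ τ F) := by
  by_cases hFm : Mem K (.arrow σ τ) F
  · rw [Phi_of_mem hFm]; exact mem_addcost 1 hFm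
  · rw [Phi_of_not_mem hFm]; exact (hF.resolve_left hFm).mem_addcost_cost 1

theorem Phi_apply_rel {σ τ : Ty S} {R : Interp K τ → Interp K τ → Prop}
    (hR_addcost : ∀ {c c' x y}, c' ≤ c → R x y → R (addcost K τ c x) (addcost K τ c' y))
    (hR_tge : ∀ {x y z}, TGe K τ x y → R y z → R x z)
    {F G : Interp K σ → Interp K τ} (hG : Mem K (.arrow σ τ) G ∨ IsConst K σ τ G)
    (hFG : ∀ x, Mem K σ x → R (F x) (G x)) {x : Interp K σ} (hx : Mem K σ x) :
    R (Phi K σ τ F x) (Phi K σ τ G x) := by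
  by_cases hFm : Mem K (.arrow σ τ) F <;> by_cases hGm : Mem K (.arrow σ τ) G
  · rw [Phi_of_mem hFm, Phi_of_mem hGm]; exact hR_addcost le_rfl (hFG x hx)
  · rw [Phi_of_mem hFm, Phi_of_not_mem hGm]
    have hF_nul :
        TGe K τ (addcost K τ 1 (F x)) (addcost K τ (cost K σ x + 1) (F (nul K σ))) := by
      rw [add_comm, ← addcost_addcost]
      exact (tge_addcost_cost_apply_nul hFm hx).addcost_mono le_rfl
    refine hR_tge hF_nul ?_
    dsimp only
    rw [(hG.resolve_left hGm).2 x _ hx (mem_nul σ)]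
    exact hR_addcost le_rfl (hFG _ (mem_nul σ))
  · rw [Phi_of_not_mem hFm, Phi_of_mem hGm]; exact hR_addcost (by omega) (hFG x hx)
  · rw [Phi_of_not_mem hFm, Phi_of_not_mem hGm]; exact hR_addcost le_rfl (hFG x hx)

end

/-- `Φ_{σ,τ}` maps every strongly monotonic or constant function to a strongly
monotonic function, and it is itself strongly monotonic with respect to
pointwise comparison. -/
theorem Phi_monotonicity_function {S : Type} (K : S → ℕ) (σ τ : Ty S)
    (F : Interp K σ → Interp K τ)
    (hF : Mem K (Ty.arrow σ τ) F ∨ IsConst K σ τ F) :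
    Mem K (Ty.arrow σ τ) (Phi K σ τ F) ∧
    ∀ G : Interp K σ → Interp K τ,
      (Mem K (Ty.arrow σ τ) G ∨ IsConst K σ τ G) →
      ((∀ x, Mem K σ x → TGt K τ (F x) (G x)) →
        ∀ x, Mem K σ x → TGt K τ (Phi K σ τ F x) (Phi K σ τ G x)) ∧
      ((∀ x, Mem K σ x → TGe K τ (F x) (G x)) →
        ∀ x, Mem K σ x → TGe K τ (Phi K σ τ F x) (Phi K σ τ G x)) :=
  ⟨mem_Phi hF, fun _ hG =>
    ⟨fun hFG _ hx =>
      Phi_apply_rel (R := TGt K τ) (fun hc h => h.addcost_mono hc) TGe.trans_tgt hG hFG hx,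
    fun hFG _ hx =>
      Phi_apply_rel (R := TGe K τ) (fun hc h => h.addcost_mono hc) TGe.trans hG hFG hx⟩⟩
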